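/- Maximum privacy is attained exactly beyond the critical rate: for every φ ∈ [0,1), P(φ) = log₂ n if and only if φ ≥ φ_crit = TV(u‖q); in particular P(φ) < log₂ n for all φ < φ_crit and P(φ) = log₂ n for all φ ∈ [φ_crit, 1). -/

import Mathlib

/-!
STATEMENT 3. Maximum privacy is attained exactly beyond the critical rate:
for every `φ ∈ [0,1)`, `P(φ) = log₂ n` iff `φ ≥ φ_crit = TV(u‖q)`;
in particular `P(φ) < log₂ n` for all `φ < φ_crit` and `P(φ) = log₂ n`
for all `φ ∈ [φ_crit, 1)`.
-/

/-- Base-2 Shannon entropy `H(t) = -∑ tᵢ log₂ tᵢ` (with `0·log₂ 0 = 0`). -/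
noncomputable def shannon {n : ℕ} (t : Fin n → ℝ) : ℝ :=
  -∑ i, t i * Real.logb 2 (t i)

/-- A pair `(s,r)` is feasible for actual profile `q` and deferral rate `φ`. -/
def Feasible {n : ℕ} (q : Fin n → ℝ) (φ : ℝ) (s r : Fin n → ℝ) : Prop :=
  (∀ i, 0 ≤ s i) ∧ (∀ i, 0 ≤ r i) ∧ (∀ i, 0 ≤ q i - s i + r i) ∧
    (∑ i, s i = φ) ∧ (∑ i, r i = φ)

/-- The privacy–deferral function `P(φ)`. -/
noncomputable def privacyDeferral {n : ℕ} (q : Fin n → ℝ) (φ : ℝ) : ℝ :=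
  sSup {x | ∃ s r, Feasible q φ s r ∧ x = shannon (fun i => q i - s i + r i)}

/-- Total variation distance `TV(p‖q) = ½ ∑ |pᵢ - qᵢ|`. -/
noncomputable def tvDist {n : ℕ} (p q : Fin n → ℝ) : ℝ :=
  (1 / 2) * ∑ i, |p i - q i|

/-!
The apparent profile `t = q - s + r` of a feasible pair is a probability vector with
`|tᵢ - qᵢ| ≤ sᵢ + rᵢ`, hence `TV(t‖q) ≤ φ`. By strict Jensen for `-x log x`, `H(t) ≤ log₂ n`
with equality only at `t = u`, so `P(φ) = log₂ n` forces `u` to be attained (the feasible set is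
compact, so the supremum is a maximum), i.e. `TV(u‖q) ≤ φ`. Conversely, if `TV(u‖q) ≤ φ`, moving
the mass `(qᵢ - 1/n)⁺` away and `(1/n - qᵢ)⁺` in, and padding both by the slack `φ - TV(u‖q)`
spread along `u`, attains `u`.
-/

open Real Finset

section Entropy

variable {ι : Type*} [Fintype ι]

lemma Real.negMulLog_inv (x : ℝ) : negMulLog x⁻¹ = x⁻¹ * log x := by
  simp [negMulLog]

lemma nonempty_of_sum_eq_one {t : ι → ℝ} (h1 : ∑ i, t i = 1) : Nonempty ι := by
  by_contra h
  rw [not_nonempty_iff] at h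
  simp at h1

lemma sum_negMulLog_le_log_card {t : ι → ℝ} (h0 : ∀ i, 0 ≤ t i) (h1 : ∑ i, t i = 1) :
    ∑ i, negMulLog (t i) ≤ log (Fintype.card ι) := by
  have := nonempty_of_sum_eq_one h1
  have hjensen := concaveOn_negMulLog.le_map_sum (t := univ)
    (w := fun _ => (Fintype.card ι : ℝ)⁻¹) (p := t) (fun _ _ => by positivity) (by simp)
    (fun i _ => h0 i)
  simp only [smul_eq_mul, ← mul_sum, h1, mul_one, negMulLog_inv] at hjensen
  exact le_of_mul_le_mul_left hjensen (by positivity)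

lemma sum_negMulLog_lt_log_card {t : ι → ℝ} (h0 : ∀ i, 0 ≤ t i) (h1 : ∑ i, t i = 1)
    (ht : t ≠ fun _ => 1 / (Fintype.card ι : ℝ)) :
    ∑ i, negMulLog (t i) < log (Fintype.card ι) := by
  have := nonempty_of_sum_eq_one h1
  have hjensen := (strictConcaveOn_negMulLog.lt_map_sum_iff_of_pos' (t := univ)
    (w := fun _ => (Fintype.card ι : ℝ)⁻¹) (p := t) (fun _ _ => by positivity) (by simp)
    (fun i _ => h0 i)).2 ?_
  · simp only [smul_eq_mul, ← mul_sum, h1, mul_one, negMulLog_inv] at hjensen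
    exact lt_of_mul_lt_mul_left hjensen (by positivity)
  · obtain ⟨j, hj⟩ := Function.ne_iff.1 ht
    exact ⟨j, mem_univ j, by simpa [← mul_sum, h1] using hj⟩

end Entropy

section Shannon

variable {n : ℕ}

lemma shannon_eq_sum_negMulLog_div (t : Fin n → ℝ) :
    shannon t = (∑ i, negMulLog (t i)) / log 2 := by
  simp only [shannon, negMulLog, logb, sum_div, ← sum_neg_distrib]
  exact sum_congr rfl fun i _ => by ring

lemma continuous_shannon : Continuous (shannon : (Fin n → ℝ) → ℝ) := by
  simp only [funext shannon_eq_sum_negMulLog_div]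
  fun_prop

lemma shannon_uniform : shannon (fun _ : Fin n => 1 / (n : ℝ)) = logb 2 n := by
  rcases eq_or_ne (n : ℝ) 0 with hn | hn
  · simp [shannon, hn]
  · simp [shannon_eq_sum_negMulLog_div, logb, negMulLog_inv, hn]

lemma shannon_le_logb {t : Fin n → ℝ} (h0 : ∀ i, 0 ≤ t i) (h1 : ∑ i, t i = 1) :
    shannon t ≤ logb 2 n := by
  rw [shannon_eq_sum_negMulLog_div, logb]
  gcongr
  simpa using sum_negMulLog_le_log_card h0 h1

lemma shannon_lt_logb {t : Fin n → ℝ} (h0 : ∀ i, 0 ≤ t i) (h1 : ∑ i, t i = 1)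
    (ht : t ≠ fun _ => 1 / (n : ℝ)) : shannon t < logb 2 n := by
  rw [shannon_eq_sum_negMulLog_div, logb]
  gcongr
  simpa using sum_negMulLog_lt_log_card h0 h1 (by simpa using ht)

end Shannon

section Deferral

variable {n : ℕ} {q : Fin n → ℝ} {φ : ℝ}

lemma tvDist_comm (p q : Fin n → ℝ) : tvDist p q = tvDist q p := by
  simp only [tvDist, abs_sub_comm]

lemma sum_posPart_sub_eq_tvDist {p : Fin n → ℝ} (h : ∑ i, p i = ∑ i, q i) :
    ∑ i, (p i - q i)⁺ = tvDist p q := by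
  have h2 : ∀ i, (p i - q i)⁺ = (|p i - q i| + (p i - q i)) / 2 := fun i => by
    rw [abs_add_eq_two_nsmul_posPart]; simp
  simp only [h2, ← sum_div, sum_add_distrib, sum_sub_distrib, h, sub_self, add_zero, tvDist]
  ring

namespace Feasible

variable {s r : Fin n → ℝ}

lemma sum_apparent (h : Feasible q φ s r) : ∑ i, (q i - s i + r i) = ∑ i, q i := by
  simp only [sum_add_distrib, sum_sub_distrib, h.2.2.2.1, h.2.2.2.2, sub_add_cancel]

lemma tvDist_apparent_le (h : Feasible q φ s r) : tvDist (fun i => q i - s i + r i) q ≤ φ := by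
  obtain ⟨hs, hr, -, hsφ, hrφ⟩ := h
  calc tvDist (fun i => q i - s i + r i) q = (1 / 2) * ∑ i, |r i - s i| := by
        simp only [tvDist]; congr! 3; ring
    _ ≤ (1 / 2) * ∑ i, (r i + s i) := by
        gcongr with i
        exact (abs_sub _ _).trans_eq (by rw [abs_of_nonneg (hr i), abs_of_nonneg (hs i)])
    _ = φ := by rw [sum_add_distrib, hsφ, hrφ]; ring

lemma shannon_le_logb (hq1 : ∑ i, q i = 1) (h : Feasible q φ s r) :
    shannon (fun i => q i - s i + r i) ≤ logb 2 n :=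
  _root_.shannon_le_logb h.2.2.1 (h.sum_apparent.trans hq1)

end Feasible

lemma exists_feasible_apparent_eq {p : Fin n → ℝ} (hp0 : ∀ i, 0 ≤ p i) (hp1 : ∑ i, p i = 1)
    (hpq : ∑ i, p i = ∑ i, q i) (hφ : tvDist p q ≤ φ) :
    ∃ s r, Feasible q φ s r ∧ (fun i => q i - s i + r i) = p := by
  set δ := φ - tvDist p q
  have happ : ∀ i, q i - ((q i - p i)⁺ + δ * p i) + ((q i - p i)⁻ + δ * p i) = p i := fun i => by
    linear_combination -posPart_sub_negPart (q i - p i)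
  have hsum : ∀ c : Fin n → ℝ, ∑ i, c i = tvDist p q → ∑ i, (c i + δ * p i) = φ := fun c hc => by
    rw [sum_add_distrib, hc, ← mul_sum, hp1]; ring
  have hδ : 0 ≤ δ := sub_nonneg.2 hφ
  refine ⟨fun i => (q i - p i)⁺ + δ * p i, fun i => (q i - p i)⁻ + δ * p i,
    ⟨fun i => add_nonneg (posPart_nonneg _) (mul_nonneg hδ (hp0 i)),
      fun i => add_nonneg (negPart_nonneg _) (mul_nonneg hδ (hp0 i)), fun i => happ i ▸ hp0 i,
      hsum _ ?_, hsum _ ?_⟩, funext happ⟩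
  · rw [sum_posPart_sub_eq_tvDist hpq.symm, tvDist_comm]
  · simp only [← posPart_neg, neg_sub, sum_posPart_sub_eq_tvDist hpq]

lemma isCompact_setOf_feasible :
    IsCompact {p : (Fin n → ℝ) × (Fin n → ℝ) | Feasible q φ p.1 p.2} := by
  have hclosed : IsClosed {p : (Fin n → ℝ) × (Fin n → ℝ) | Feasible q φ p.1 p.2} := by
    simp only [Feasible, Set.ofPred_and, Set.ofPred_forall]
    refine .inter (isClosed_iInter fun i => isClosed_le ?_ ?_) <| .inter
      (isClosed_iInter fun i => isClosed_le ?_ ?_) <| .inter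
      (isClosed_iInter fun i => isClosed_le ?_ ?_) <| .inter (isClosed_eq ?_ ?_) (isClosed_eq ?_ ?_)
      <;> fun_prop
  refine (isCompact_Icc (a := 0) (b := (fun _ => φ, fun _ => φ))).of_isClosed_subset hclosed ?_
  rintro ⟨s, r⟩ ⟨hs, hr, -, hsφ, hrφ⟩
  refine ⟨⟨hs, hr⟩, fun i => ?_, fun i => ?_⟩
  · exact hsφ ▸ single_le_sum (fun j _ => hs j) (mem_univ i)
  · exact hrφ ▸ single_le_sum (fun j _ => hr j) (mem_univ i)

lemma privacyDeferral_eq_sSup_image : privacyDeferral q φ =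
    sSup ((fun p => shannon (fun i => q i - p.1 i + p.2 i)) ''
      {p : (Fin n → ℝ) × (Fin n → ℝ) | Feasible q φ p.1 p.2}) := by
  unfold privacyDeferral
  congr 1
  ext x
  simp [eq_comm]

lemma exists_feasible_privacyDeferral_eq (hq0 : ∀ i, 0 ≤ q i) (hq1 : ∑ i, q i = 1)
    (hφ : 0 ≤ φ) :
    ∃ s r, Feasible q φ s r ∧ privacyDeferral q φ = shannon (fun i => q i - s i + r i) := by
  have hne : {p : (Fin n → ℝ) × (Fin n → ℝ) | Feasible q φ p.1 p.2}.Nonempty := by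
    refine ⟨(φ • q, φ • q), fun i => ?_, fun i => ?_, fun i => ?_, ?_, ?_⟩ <;>
      simp [← mul_sum, hq1, hq0, mul_nonneg hφ]
  obtain ⟨⟨s, r⟩, hsr, hmax⟩ := (isCompact_setOf_feasible.image
    (continuous_shannon.comp (by fun_prop : Continuous fun p : (Fin n → ℝ) × (Fin n → ℝ) =>
      fun i => q i - p.1 i + p.2 i))).sSup_mem (hne.image _)
  exact ⟨s, r, hsr, privacyDeferral_eq_sSup_image.trans hmax.symm⟩

lemma privacyDeferral_eq_logb_of_tvDist_le (hq1 : ∑ i, q i = 1)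
    (hφ : tvDist (fun _ => 1 / (n : ℝ)) q ≤ φ) : privacyDeferral q φ = logb 2 n := by
  have hn : n ≠ 0 := by rintro rfl; simp at hq1
  have hu1 : ∑ _i : Fin n, 1 / (n : ℝ) = 1 := by simp [hn]
  obtain ⟨s, r, hsr, happ⟩ :=
    exists_feasible_apparent_eq (fun _ => by positivity) hu1 (hu1.trans hq1.symm) hφ
  refine IsGreatest.csSup_eq ⟨⟨s, r, hsr, by rw [happ, shannon_uniform]⟩, ?_⟩
  rintro x ⟨s, r, hsr, rfl⟩
  exact hsr.shannon_le_logb hq1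

lemma privacyDeferral_lt_logb_of_lt_tvDist (hq0 : ∀ i, 0 ≤ q i) (hq1 : ∑ i, q i = 1)
    (hφ0 : 0 ≤ φ) (hφ : φ < tvDist (fun _ => 1 / (n : ℝ)) q) : privacyDeferral q φ < logb 2 n := by
  obtain ⟨s, r, hsr, hmax⟩ := exists_feasible_privacyDeferral_eq hq0 hq1 hφ0
  rw [hmax]
  refine shannon_lt_logb hsr.2.2.1 (hsr.sum_apparent.trans hq1) fun hu => ?_
  exact hφ.not_ge (hu ▸ hsr.tvDist_apparent_le)

end Deferral

theorem max_privacy_iff_ge_critical_rate_general {n : ℕ}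
    (q : Fin n → ℝ) (hq0 : ∀ i, 0 ≤ q i) (hq1 : ∑ i, q i = 1) :
    (∀ φ : ℝ, 0 ≤ φ → φ < 1 →
      (privacyDeferral q φ = Real.logb 2 n ↔
        tvDist (fun _ => 1 / (n : ℝ)) q ≤ φ)) ∧
    (∀ φ : ℝ, 0 ≤ φ → φ < tvDist (fun _ => 1 / (n : ℝ)) q →
      privacyDeferral q φ < Real.logb 2 n) ∧
    (∀ φ : ℝ, tvDist (fun _ => 1 / (n : ℝ)) q ≤ φ → φ < 1 →
      privacyDeferral q φ = Real.logb 2 n) := by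
  have hlt := fun φ => privacyDeferral_lt_logb_of_lt_tvDist (φ := φ) hq0 hq1
  have heq := fun φ => privacyDeferral_eq_logb_of_tvDist_le (φ := φ) hq1
  refine ⟨fun φ hφ0 _ => ⟨fun h => ?_, heq φ⟩, hlt, fun φ hφ _ => heq φ hφ⟩
  by_contra hcrit
  exact (hlt φ hφ0 (not_le.1 hcrit)).ne h

theorem max_privacy_iff_ge_critical_rate {n : ℕ} (hn : 2 ≤ n)
    (q : Fin n → ℝ) (hq0 : ∀ i, 0 ≤ q i) (hq1 : ∑ i, q i = 1) :
    (∀ φ : ℝ, 0 ≤ φ → φ < 1 →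
      (privacyDeferral q φ = Real.logb 2 n ↔
        tvDist (fun _ => 1 / (n : ℝ)) q ≤ φ)) ∧
    (∀ φ : ℝ, 0 ≤ φ → φ < tvDist (fun _ => 1 / (n : ℝ)) q →
      privacyDeferral q φ < Real.logb 2 n) ∧
    (∀ φ : ℝ, tvDist (fun _ => 1 / (n : ℝ)) q ≤ φ → φ < 1 →
      privacyDeferral q φ = Real.logb 2 n) :=
  max_privacy_iff_ge_critical_rate_general q hq0 hq1
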